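/- Let p > 2 be a prime, r ≥ 1, and let G_r be Ito's group. Then |K(G_r)| − 1 = (p^{r+1} − 1)(p^r − 1)/(p² − 1). -/

import Mathlib

open scoped Classical

namespace Paper

/-- The commutator `[x,y] = x⁻¹y⁻¹xy`. -/
def comm {G : Type*} [Group G] (x y : G) : G := x⁻¹ * y⁻¹ * x * y

/-- `K(G)`, the set of commutators in `G`. -/
def KG (G : Type*) [Group G] : Set G := {g : G | ∃ x y : G, comm x y = g}

/-- The fiber of `g` under the commutator word map. -/
def fiber {G : Type*} [Group G] (g : G) : Set (G × G) := {q : G × G | comm q.1 q.2 = g}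

/-- `Pr_g(G) = |fiber(g)| / |G|²`. -/
noncomputable def Pr (G : Type*) [Group G] (g : G) : ℚ :=
  (Nat.card (fiber g) : ℚ) / ((Nat.card G : ℚ)) ^ 2

/-- `P(G) = {Pr_g(G) : g ∈ K(G), g ≠ 1}`. -/
noncomputable def PSet (G : Type*) [Group G] : Set ℚ :=
  {q : ℚ | ∃ g ∈ KG G, g ≠ 1 ∧ Pr G g = q}

/-- The conjugacy class `g^G` of `g` in `G`. -/
def conjClass {G : Type*} [Group G] (g : G) : Set G := {h : G | ∃ x : G, x⁻¹ * g * x = h}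

/-- `G` is of conjugate type `(1, m)`: every noncentral element has conjugacy
class of size exactly `m`. -/
def IsConjugateType1 (G : Type*) [Group G] (m : ℕ) : Prop :=
  ∀ g : G, g ∉ Subgroup.center G → Nat.card (conjClass g) = m

/-- `TZ_g = {xZ(G) ∈ G/Z(G) : g ∈ [x,G]}`. -/
def TZ (G : Type*) [Group G] (g : G) : Set (G ⧸ Subgroup.center G) :=
  {xz : G ⧸ Subgroup.center G |
    ∃ x : G, (QuotientGroup.mk x : G ⧸ Subgroup.center G) = xz ∧ ∃ h : G, comm x h = g}




/-- The relations of Ito's group `G_r`: the commutators are central,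
and the generators and their commutators have order dividing `p`. -/
def itoRels (p r : ℕ) : Set (FreeGroup (Fin (r + 1))) :=
  {w : FreeGroup (Fin (r + 1)) |
    (∃ i j k : Fin (r + 1), i < j ∧
      w = comm (FreeGroup.of k) (comm (FreeGroup.of i) (FreeGroup.of j))) ∨
    (∃ i : Fin (r + 1), w = (FreeGroup.of i) ^ p) ∨
    (∃ i j : Fin (r + 1), i < j ∧ w = (comm (FreeGroup.of i) (FreeGroup.of j)) ^ p)}

/-- Ito's group `G_r`, presented on `r+1` generators. -/
abbrev ItoGroup (p r : ℕ) : Type := PresentedGroup (itoRels p r)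

/-- The generators `a_1, …, a_{r+1}` of Ito's group (0-indexed). -/
def itoGen (p r : ℕ) (i : Fin (r + 1)) : ItoGroup p r := PresentedGroup.of i


/-!
The assignment `a_i ↦ (e_i, 0)` maps `G_r` to `𝔽_p^{r+1} × M_{r+1}(𝔽_p)` with the multiplication
twisted by the strictly upper triangular part of the outer product; there the commutator of
`x, y` becomes the upper half of the wedge `u ∧ v = u vᵀ - v uᵀ` of their images `u, v`.
Conversely `G_r` has class two, so `[x, y]` is bilinear and equals a product of powers of the
`[a_i, a_j]` with exponents read off from `u ∧ v`. Hence `K(G_r)` is in bijection with the set of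
decomposable wedges. The pairs with a given nonzero wedge `u₀ ∧ v₀` are exactly the `(u₀, v₀) A`
with `A ∈ SL₂(𝔽_p)`, and the pairs with nonzero wedge are the `(p^{r+1} - 1)(p^{r+1} - p)`
linearly independent ones; the same count in dimension two gives `|SL₂(𝔽_p)| = p (p² - 1)`.
-/

section CommutatorCentral

variable {G : Type*} [Group G]

lemma map_comm {H F : Type*} [Group H] [FunLike F G H] [MonoidHomClass F G H] (f : F) (x y : G) :
    f (comm x y) = comm (f x) (f y) := by
  simp [comm]

lemma comm_self (x : G) : comm x x = 1 := by simp [comm]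

lemma inv_comm (x y : G) : (comm x y)⁻¹ = comm y x := by simp [comm, mul_assoc]

lemma comm_eq_one_iff {x y : G} : comm x y = 1 ↔ Commute x y := by
  rw [show comm x y = (y * x)⁻¹ * (x * y) by simp [comm, mul_assoc], inv_mul_eq_one, eq_comm]
  rfl

lemma comm_mem_iff_commute_mk (N : Subgroup G) [N.Normal] (x y : G) :
    comm x y ∈ N ↔ Commute (x : G ⧸ N) y := by
  rw [Commute, SemiconjBy, ← QuotientGroup.mk_mul, ← QuotientGroup.mk_mul, eq_comm,
    QuotientGroup.eq, show (y * x)⁻¹ * (x * y) = comm x y by simp [comm, mul_assoc]]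

lemma mem_center_of_comm_eq_one {s : Set G} (hs : Subgroup.closure s = ⊤) {z : G}
    (h : ∀ g ∈ s, comm g z = 1) : z ∈ Subgroup.center G := by
  rw [Subgroup.center_eq_iInf hs]
  simp only [Subgroup.mem_iInf, Subgroup.mem_centralizer_singleton_iff]
  exact fun g hg => ((comm_eq_one_iff.mp (h g hg)).eq).symm

/-- `G ⧸ Z(G)` is generated by the pairwise commuting images of `s`. -/
lemma comm_mem_center_of_closure {s : Set G} (hs : Subgroup.closure s = ⊤)
    (h : ∀ x ∈ s, ∀ y ∈ s, comm x y ∈ Subgroup.center G) (x y : G) :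
    comm x y ∈ Subgroup.center G := by
  set π := QuotientGroup.mk' (Subgroup.center G)
  have hcomm : ∀ a ∈ π '' s, ∀ b ∈ π '' s, a * b = b * a := by
    rintro _ ⟨a, ha, rfl⟩ _ ⟨b, hb, rfl⟩
    exact (comm_mem_iff_commute_mk _ a b).mp (h a ha b hb)
  have hgen : Subgroup.closure (π '' s) = ⊤ := by
    rw [← MonoidHom.map_closure, hs, ← MonoidHom.range_eq_map, MonoidHom.range_eq_top]
    exact QuotientGroup.mk'_surjective _
  have hmem a : a ∈ Subgroup.centralizer (Subgroup.centralizer (π '' s)) :=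
    Subgroup.closure_le_centralizer_centralizer _ (hgen ▸ Subgroup.mem_top a)
  exact (comm_mem_iff_commute_mk _ x y).mpr
    (Set.centralizer_centralizer_comm_of_comm hcomm _ (hmem _) _ (hmem _))

lemma comm_mul_left_of_forall_mem_center (hG : ∀ x y : G, comm x y ∈ Subgroup.center G)
    (x x' y : G) : comm (x * x') y = comm x y * comm x' y := by
  have hc : Commute x'⁻¹ (comm x y) := Subgroup.mem_center_iff.mp (hG x y) x'⁻¹
  calc comm (x * x') y = x'⁻¹ * comm x y * x' * comm x' y := by simp only [comm]; group
    _ = comm x y * comm x' y := by rw [hc.eq]; group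

lemma comm_mul_right_of_forall_mem_center (hG : ∀ x y : G, comm x y ∈ Subgroup.center G)
    (x y y' : G) : comm x (y * y') = comm x y * comm x y' := by
  have hc : Commute y'⁻¹ (comm x y) := Subgroup.mem_center_iff.mp (hG x y) y'⁻¹
  have hc' : Commute (comm x y') (comm x y) := Subgroup.mem_center_iff.mp (hG x y) _
  calc comm x (y * y') = comm x y' * (y'⁻¹ * comm x y * y') := by simp only [comm]; group
    _ = comm x y * comm x y' := by rw [hc.eq, inv_mul_cancel_right, hc'.eq]

end CommutatorCentral

variable {V A : Type*} [AddCommGroup V] [AddCommGroup A] in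
@[ext] structure TwistedProd (β : V →+ V →+ A) where
  v : V
  a : A

namespace TwistedProd

variable {V A : Type*} [AddCommGroup V] [AddCommGroup A] {β : V →+ V →+ A}

instance : Mul (TwistedProd β) := ⟨fun x y => ⟨x.v + y.v, x.a + y.a + β x.v y.v⟩⟩
instance : One (TwistedProd β) := ⟨⟨0, 0⟩⟩
instance : Inv (TwistedProd β) := ⟨fun x => ⟨-x.v, -x.a + β x.v x.v⟩⟩

@[simp] lemma mul_v (x y : TwistedProd β) : (x * y).v = x.v + y.v := rfl
@[simp] lemma mul_a (x y : TwistedProd β) : (x * y).a = x.a + y.a + β x.v y.v := rfl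
@[simp] lemma one_v : (1 : TwistedProd β).v = 0 := rfl
@[simp] lemma one_a : (1 : TwistedProd β).a = 0 := rfl
@[simp] lemma inv_v (x : TwistedProd β) : x⁻¹.v = -x.v := rfl
@[simp] lemma inv_a (x : TwistedProd β) : x⁻¹.a = -x.a + β x.v x.v := rfl

instance : Group (TwistedProd β) where
  mul_assoc x y z := by
    ext
    · exact add_assoc _ _ _
    · simp only [mul_a, mul_v, map_add, AddMonoidHom.add_apply]
      abel
  one_mul x := by ext <;> simp
  mul_one x := by ext <;> simp
  inv_mul_cancel x := by
    ext
    · exact neg_add_cancel _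
    · simp only [mul_a, inv_a, inv_v, one_a, map_neg, AddMonoidHom.neg_apply]
      abel

lemma comm_eq (x y : TwistedProd β) : comm x y = ⟨0, β x.v y.v - β y.v x.v⟩ := by
  ext
  · simp [comm]
  · simp only [comm, mul_a, mul_v, inv_a, inv_v, map_add, map_neg, AddMonoidHom.add_apply,
      AddMonoidHom.neg_apply]
    abel

lemma mk_pow {v : V} (hv : β v v = 0) (a : A) (k : ℕ) :
    (⟨v, a⟩ : TwistedProd β) ^ k = ⟨k • v, k • a⟩ := by
  induction k with
  | zero => ext <;> simp
  | succ k ih => ext <;> simp [pow_succ, ih, succ_nsmul, hv]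

end TwistedProd

section Wedge

variable {ι R : Type*} [CommRing R]

def wedge (u v : ι → R) : Matrix ι ι R := Matrix.of fun i j => u i * v j - v i * u j

@[simp] lemma wedge_apply (u v : ι → R) (i j : ι) : wedge u v i j = u i * v j - v i * u j := rfl

lemma wedge_add_left (u u' v : ι → R) : wedge (u + u') v = wedge u v + wedge u' v := by
  ext i j; simp only [wedge_apply, Matrix.add_apply, Pi.add_apply]; ring

lemma wedge_add_right (u v v' : ι → R) : wedge u (v + v') = wedge u v + wedge u v' := by
  ext i j; simp only [wedge_apply, Matrix.add_apply, Pi.add_apply]; ring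

@[simp] lemma wedge_self (u : ι → R) : wedge u u = 0 := by
  ext i j; simp only [wedge_apply, Matrix.zero_apply]; ring

lemma wedge_swap (u v : ι → R) : wedge v u = -wedge u v := by
  ext i j; simp only [wedge_apply, Matrix.neg_apply]; ring

lemma wedge_lincomb (u v : ι → R) (a b c d : R) :
    wedge (a • u + c • v) (b • u + d • v) = (a * d - c * b) • wedge u v := by
  ext i j; simp only [wedge_apply, Matrix.smul_apply, Pi.add_apply, Pi.smul_apply, smul_eq_mul]
  ring

/-- The `3 × 3` minor of `x, u₀, v₀` on the rows `i, j, k` vanishes, because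
`wedge x y = wedge u₀ v₀`. -/
lemma wedge_apply_smul_eq {x y u₀ v₀ : ι → R} (h : wedge x y = wedge u₀ v₀) (i j : ι) :
    wedge u₀ v₀ i j • x = wedge x v₀ i j • u₀ + wedge u₀ x i j • v₀ := by
  ext k
  have h' a b : x a * y b - y a * x b = u₀ a * v₀ b - v₀ a * u₀ b := by
    simpa using congrFun (congrFun h a) b
  simp only [Pi.smul_apply, Pi.add_apply, smul_eq_mul, wedge_apply]
  linear_combination x j * h' i k - x i * h' j k - x k * h' i j

lemma wedge_eq_wedge_of_forall_lt [LinearOrder ι] {u v u' v' : ι → R}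
    (h : ∀ i j, i < j → wedge u v i j = wedge u' v' i j) : wedge u v = wedge u' v' := by
  ext i j
  rcases lt_trichotomy i j with hij | rfl | hij
  · exact h i j hij
  · simp [mul_comm]
  · have hji := h j i hij
    simp only [wedge_apply] at hji ⊢
    linear_combination -hji

end Wedge

section WedgeField

variable {ι K : Type*} [Field K]

lemma wedge_ne_zero_iff {u v : ι → K} : wedge u v ≠ 0 ↔ LinearIndependent K ![u, v] := by
  constructor
  · intro h
    refine LinearIndependent.pair_iff.mpr fun s t hst => ?_
    have hst' k : s * u k + t * v k = 0 := by simpa using congrFun hst k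
    have hs : s • wedge u v = 0 := by
      ext i j; simp only [Matrix.smul_apply, wedge_apply, smul_eq_mul, Matrix.zero_apply]
      linear_combination v j * hst' i - v i * hst' j
    have ht : t • wedge u v = 0 := by
      ext i j; simp only [Matrix.smul_apply, wedge_apply, smul_eq_mul, Matrix.zero_apply]
      linear_combination u i * hst' j - u j * hst' i
    exact ⟨(smul_eq_zero.mp hs).resolve_right h, (smul_eq_zero.mp ht).resolve_right h⟩
  · intro h h0
    obtain ⟨k, hk⟩ := Function.ne_iff.mp (h.ne_zero 0)
    have hdep : (-v k) • u + u k • v = 0 := by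
      ext l
      simp only [Pi.add_apply, Pi.smul_apply, smul_eq_mul, Pi.zero_apply]
      linear_combination (by simpa using congrFun (congrFun h0 k) l : u k * v l - v k * u l = 0)
    exact hk (LinearIndependent.pair_iff.mp h _ _ hdep).2

lemma exists_specialLinearGroup_of_wedge_eq {u v u₀ v₀ : ι → K} (h₀ : wedge u₀ v₀ ≠ 0)
    (h : wedge u v = wedge u₀ v₀) :
    ∃ A : Matrix.SpecialLinearGroup (Fin 2) K,
      A 0 0 • u₀ + A 1 0 • v₀ = u ∧ A 0 1 • u₀ + A 1 1 • v₀ = v := by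
  obtain ⟨i, j, hij⟩ : ∃ i j, wedge u₀ v₀ i j ≠ 0 := by
    by_contra! H
    exact h₀ (Matrix.ext H)
  set m := wedge u₀ v₀ i j
  have hu : (wedge u v₀ i j / m) • u₀ + (wedge u₀ u i j / m) • v₀ = u := by
    rw [div_eq_inv_mul, div_eq_inv_mul, mul_smul, mul_smul, ← smul_add,
      ← wedge_apply_smul_eq h, inv_smul_smul₀ hij]
  have hv : (wedge v v₀ i j / m) • u₀ + (wedge u₀ v i j / m) • v₀ = v := by
    rw [div_eq_inv_mul, div_eq_inv_mul, mul_smul, mul_smul, ← smul_add,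
      ← wedge_apply_smul_eq (y := -u) (by rw [← h]; ext; simp; ring),
      inv_smul_smul₀ hij]
  set a := wedge u v₀ i j / m
  set b := wedge v v₀ i j / m
  set c := wedge u₀ u i j / m
  set d := wedge u₀ v i j / m
  have hdet : a * d - c * b = 1 := by
    refine smul_left_injective K h₀ ?_
    simp only [one_smul]
    rw [← wedge_lincomb, hu, hv, h]
  refine ⟨⟨!![a, b; c, d], by rw [Matrix.det_fin_two_of]; linear_combination hdet⟩, ?_, ?_⟩
  · simpa using hu
  · simpa using hv

lemma card_wedge_fiber {u₀ v₀ : ι → K} (h₀ : wedge u₀ v₀ ≠ 0) :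
    Nat.card {q : (ι → K) × (ι → K) // wedge q.1 q.2 = wedge u₀ v₀} =
      Nat.card (Matrix.SpecialLinearGroup (Fin 2) K) := by
  have hli := wedge_ne_zero_iff.mp h₀
  symm
  refine Nat.card_eq_of_bijective
    (fun A => ⟨(A 0 0 • u₀ + A 1 0 • v₀, A 0 1 • u₀ + A 1 1 • v₀), ?_⟩) ⟨?_, ?_⟩
  · have hA := A.det_coe
    rw [Matrix.det_fin_two] at hA
    rw [wedge_lincomb, mul_comm (A 1 0), hA, one_smul]
  · intro A B hAB
    simp only [Subtype.mk.injEq, Prod.mk.injEq] at hAB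
    obtain ⟨h00, h10⟩ := hli.eq_of_pair hAB.1
    obtain ⟨h01, h11⟩ := hli.eq_of_pair hAB.2
    ext i j
    fin_cases i <;> fin_cases j <;> assumption
  · rintro ⟨⟨u, v⟩, h⟩
    obtain ⟨A, hu, hv⟩ := exists_specialLinearGroup_of_wedge_eq h₀ h
    exact ⟨A, by simp [hu, hv]⟩

variable [Fintype ι] [Fintype K]

lemma card_range_wedge_sub_one_mul (hι : 2 ≤ Fintype.card ι) :
    (Nat.card (Set.range (Function.uncurry (wedge (ι := ι) (R := K)))) - 1) *
        Nat.card (Matrix.SpecialLinearGroup (Fin 2) K) =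
      (Fintype.card K ^ Fintype.card ι - 1) *
        (Fintype.card K ^ Fintype.card ι - Fintype.card K) := by
  set S := (Finset.univ : Finset ((ι → K) × (ι → K))).image (Function.uncurry wedge)
  set T := Finset.univ.filter fun q : (ι → K) × (ι → K) => Function.uncurry wedge q ≠ 0
  have hS : Nat.card (Set.range (Function.uncurry (wedge (ι := ι) (R := K)))) = S.card := by
    rw [Nat.card_eq_fintype_card, ← Set.toFinset_card, Set.toFinset_range]
  have hT : T.card = Nat.card {s : Fin 2 → ι → K // LinearIndependent K s} := by
    rw [← Fintype.card_subtype, ← Nat.card_eq_fintype_card]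
    refine Nat.card_congr (Equiv.subtypeEquiv (finTwoArrowEquiv _).symm fun q => ?_)
    rw [finTwoArrowEquiv_symm_apply, Function.uncurry_def, wedge_ne_zero_iff]
  have hfib : ∀ M ∈ S.erase 0, (T.filter fun q => Function.uncurry wedge q = M).card =
      Nat.card (Matrix.SpecialLinearGroup (Fin 2) K) := by
    intro M hM
    obtain ⟨hM0, hM⟩ := Finset.mem_erase.mp hM
    obtain ⟨⟨u₀, v₀⟩, -, rfl⟩ := Finset.mem_image.mp hM
    rw [← card_wedge_fiber hM0, Nat.card_eq_fintype_card, Fintype.card_subtype]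
    refine congrArg Finset.card (Finset.ext fun q => ?_)
    rw [Finset.mem_filter, Finset.mem_filter, Finset.mem_filter]
    simp only [Finset.mem_univ, true_and, Function.uncurry_def]
    exact ⟨And.right, fun h => ⟨h ▸ hM0, h⟩⟩
  have hmaps : ∀ q ∈ T, Function.uncurry wedge q ∈ S.erase 0 := fun q hq =>
    Finset.mem_erase.mpr
      ⟨(Finset.mem_filter.mp hq).2, Finset.mem_image_of_mem _ (Finset.mem_univ q)⟩
  have h0 : (0 : Matrix ι ι K) ∈ S :=
    Finset.mem_image.mpr ⟨(0, 0), Finset.mem_univ _, by ext; simp⟩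
  rw [hS, ← Finset.card_erase_of_mem h0, ← smul_eq_mul, ← Finset.sum_const,
    ← Finset.sum_congr rfl hfib, ← Finset.card_eq_sum_card_fiberwise hmaps, hT,
    card_linearIndependent, Fin.prod_univ_two]
  · simp [Module.finrank_fintype_fun_eq_card]
  · simpa [Module.finrank_fintype_fun_eq_card] using hι

lemma card_range_wedge_fin_two :
    Nat.card (Set.range (Function.uncurry (wedge (ι := Fin 2) (R := K)))) = Fintype.card K := by
  rw [← Nat.card_eq_fintype_card]
  symm
  refine Nat.card_eq_of_bijective
    (fun t => ⟨wedge (Pi.single 0 t) (Pi.single 1 1), (Pi.single 0 t, Pi.single 1 1), rfl⟩)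
    ⟨fun s t hst => ?_, ?_⟩
  · simpa using congrFun (congrFun (congrArg Subtype.val hst) 0) 1
  · rintro ⟨_, ⟨u, v⟩, rfl⟩
    refine ⟨wedge u v 0 1, Subtype.ext ?_⟩
    ext i j
    fin_cases i <;> fin_cases j <;> simp <;> ring

/-- In dimension two the nonzero wedges are the `q - 1` nonzero multiples of a single matrix. -/
lemma card_specialLinearGroup_fin_two :
    Nat.card (Matrix.SpecialLinearGroup (Fin 2) K) = Fintype.card K * (Fintype.card K ^ 2 - 1) := by
  set q := Fintype.card K
  have hq : 0 < q - 1 := Nat.sub_pos_of_lt Fintype.one_lt_card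
  have h := card_range_wedge_sub_one_mul (ι := Fin 2) (K := K) le_rfl
  rw [card_range_wedge_fin_two, Fintype.card_fin, sq q, ← Nat.mul_sub_one q q] at h
  refine Nat.eq_of_mul_eq_mul_left hq ?_
  rw [h, sq]
  ring

end WedgeField

lemma card_range_eq_of_eq_iff {α β γ : Type*} {f : α → β} {g : α → γ}
    (h : ∀ a b, f a = f b ↔ g a = g b) : Nat.card (Set.range f) = Nat.card (Set.range g) :=
  Nat.card_congr <| (Setoid.quotientKerEquivRange f).symm.trans <|
    (Quotient.congrRight h).trans (Setoid.quotientKerEquivRange g)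

section UpperOuter

variable {ι R : Type*} [LinearOrder ι] [CommRing R]

def upperOuter : (ι → R) →+ (ι → R) →+ Matrix ι ι R :=
  AddMonoidHom.mk'
    (fun u => AddMonoidHom.mk' (fun w => Matrix.of fun i j => if i < j then u i * w j else 0)
      fun w w' => by
        ext i j
        simp only [Matrix.of_apply, Matrix.add_apply, Pi.add_apply]
        split_ifs <;> ring)
    fun u u' => by
      ext w i j
      simp only [AddMonoidHom.mk'_apply, AddMonoidHom.add_apply, Matrix.of_apply,
        Matrix.add_apply, Pi.add_apply]
      split_ifs <;> ring

@[simp] lemma upperOuter_apply (u w : ι → R) (i j : ι) :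
    upperOuter u w i j = if i < j then u i * w j else 0 := rfl

lemma upperOuter_single_self (i : ι) (a b : R) :
    upperOuter (Pi.single i a) (Pi.single i b) = 0 := by
  ext k l
  simp only [upperOuter_apply, Matrix.zero_apply, ite_eq_right_iff]
  intro hkl
  by_cases hk : k = i
  · simp [hk, (hk ▸ hkl).ne']
  · simp [Pi.single_apply, hk]

lemma upperOuter_sub_swap_apply (u v : ι → R) (i j : ι) :
    (upperOuter u v - upperOuter v u) i j = if i < j then wedge u v i j else 0 := by
  simp only [Matrix.sub_apply, upperOuter_apply, wedge_apply]
  split_ifs <;> simp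

end UpperOuter

section Ito

open scoped IsMulCommutative

variable {p r : ℕ}

/-- The cocycle is strictly upper triangular so that `⟨e_i, 0⟩ ^ p = ⟨p • e_i, 0⟩ = 1`. -/
abbrev ItoModel (p r : ℕ) := TwistedProd (upperOuter (ι := Fin (r + 1)) (R := ZMod p))

lemma itoRels_lift_eq_one :
    ∀ w ∈ itoRels p r, FreeGroup.lift (fun i => (⟨Pi.single i 1, 0⟩ : ItoModel p r)) w = 1 := by
  rintro w (⟨i, j, k, -, rfl⟩ | ⟨i, rfl⟩ | ⟨i, j, -, rfl⟩)
  · simp [map_comm, TwistedProd.comm_eq]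
    rfl
  · rw [map_pow, FreeGroup.lift_apply_of, TwistedProd.mk_pow (upperOuter_single_self i 1 1)]
    ext <;> simp
  · rw [map_pow, map_comm, FreeGroup.lift_apply_of, FreeGroup.lift_apply_of, TwistedProd.comm_eq,
      TwistedProd.mk_pow (by simp)]
    ext <;> simp

def toItoModel (p r : ℕ) : ItoGroup p r →* ItoModel p r :=
  PresentedGroup.toGroup itoRels_lift_eq_one

@[simp] lemma toItoModel_itoGen (i : Fin (r + 1)) :
    toItoModel p r (itoGen p r i) = ⟨Pi.single i 1, 0⟩ :=
  PresentedGroup.toGroup.of _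

def itoVec (x : ItoGroup p r) : Fin (r + 1) → ZMod p := (toItoModel p r x).v

@[simp] lemma itoVec_mul (x y : ItoGroup p r) : itoVec (x * y) = itoVec x + itoVec y := by
  simp [itoVec]

lemma itoVec_surjective [NeZero p] : Function.Surjective (itoVec (p := p) (r := r)) := by
  intro u
  induction u using Pi.single_induction with
  | zero => exact ⟨1, by simp [itoVec]⟩
  | add u v hu hv =>
    obtain ⟨x, rfl⟩ := hu
    obtain ⟨y, rfl⟩ := hv
    exact ⟨x * y, itoVec_mul x y⟩
  | single i m =>
    refine ⟨itoGen p r i ^ m.val, ?_⟩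
    rw [itoVec, map_pow, toItoModel_itoGen, TwistedProd.mk_pow (upperOuter_single_self i 1 1),
      ← Pi.single_smul, nsmul_one, ZMod.natCast_zmod_val]

@[simp] lemma itoVec_itoGen (i : Fin (r + 1)) : itoVec (itoGen p r i) = Pi.single i 1 := by
  simp [itoVec]

lemma closure_range_itoGen : Subgroup.closure (Set.range (itoGen p r)) = ⊤ :=
  PresentedGroup.closure_range_of _

lemma comm_itoGen_mem_center (i j : Fin (r + 1)) :
    comm (itoGen p r i) (itoGen p r j) ∈ Subgroup.center (ItoGroup p r) := by
  have hlt : ∀ i j, i < j → comm (itoGen p r i) (itoGen p r j) ∈ Subgroup.center (ItoGroup p r) :=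
    fun i j hij => mem_center_of_comm_eq_one closure_range_itoGen <| by
      rintro _ ⟨k, rfl⟩
      have h := PresentedGroup.one_of_mem (rels := itoRels p r) (Or.inl ⟨i, j, k, hij, rfl⟩)
      rwa [map_comm, map_comm] at h
  rcases lt_trichotomy i j with hij | rfl | hij
  · exact hlt i j hij
  · rw [comm_self]
    exact one_mem _
  · rw [← inv_comm]
    exact inv_mem (hlt j i hij)

lemma comm_mem_center_itoGroup (x y : ItoGroup p r) : comm x y ∈ Subgroup.center (ItoGroup p r) :=
  comm_mem_center_of_closure closure_range_itoGen
    (by rintro _ ⟨i, rfl⟩ _ ⟨j, rfl⟩; exact comm_itoGen_mem_center i j) x y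

def genComm (i j : Fin (r + 1)) : Subgroup.center (ItoGroup p r) :=
  ⟨comm (itoGen p r i) (itoGen p r j), comm_itoGen_mem_center i j⟩

lemma genComm_pow {i j : Fin (r + 1)} (hij : i < j) : genComm (p := p) i j ^ p = 1 :=
  Subtype.ext <| by
    have h := PresentedGroup.one_of_mem (rels := itoRels p r) (Or.inr (Or.inr ⟨i, j, hij, rfl⟩))
    rwa [map_pow, map_comm] at h

def commProd (M : Matrix (Fin (r + 1)) (Fin (r + 1)) (ZMod p)) : Subgroup.center (ItoGroup p r) :=
  ∏ q ∈ Finset.univ.filter (fun q : Fin (r + 1) × Fin (r + 1) => q.1 < q.2),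
    genComm q.1 q.2 ^ (M q.1 q.2).val

lemma commProd_add [NeZero p] (M N : Matrix (Fin (r + 1)) (Fin (r + 1)) (ZMod p)) :
    commProd (M + N) = commProd M * commProd N := by
  rw [commProd, commProd, commProd, ← Finset.prod_mul_distrib]
  refine Finset.prod_congr rfl fun q hq => ?_
  rw [Matrix.add_apply, ← pow_add, ZMod.val_add,
    ← pow_eq_pow_mod _ (genComm_pow (Finset.mem_filter.mp hq).2)]

lemma commProd_zero : commProd (0 : Matrix (Fin (r + 1)) (Fin (r + 1)) (ZMod p)) = 1 := by
  simp [commProd]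

lemma commProd_neg [NeZero p] (M : Matrix (Fin (r + 1)) (Fin (r + 1)) (ZMod p)) :
    commProd (-M) = (commProd M)⁻¹ :=
  eq_inv_of_mul_eq_one_left (by rw [← commProd_add, neg_add_cancel, commProd_zero])

lemma commProd_wedge_single_of_lt [Fact (1 < p)] {i j : Fin (r + 1)} (hij : i < j) :
    commProd (wedge (Pi.single i (1 : ZMod p)) (Pi.single j 1)) = genComm i j := by
  rw [commProd,
    Finset.prod_eq_single_of_mem (i, j) (Finset.mem_filter.mpr ⟨Finset.mem_univ _, hij⟩)]
  · simp [hij.ne, hij.ne', ZMod.val_one]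
  · rintro ⟨k, l⟩ hkl hne
    have hkl : k < l := (Finset.mem_filter.mp hkl).2
    have h0 : wedge (Pi.single i (1 : ZMod p)) (Pi.single j 1) k l = 0 := by
      simp only [wedge_apply, Pi.single_apply]
      split_ifs <;> simp_all [lt_asymm hij]
    rw [h0, ZMod.val_zero, pow_zero]

lemma commProd_wedge_single [Fact (1 < p)] (i j : Fin (r + 1)) :
    (commProd (wedge (Pi.single i (1 : ZMod p)) (Pi.single j 1)) : ItoGroup p r) =
      comm (itoGen p r i) (itoGen p r j) := by
  rcases lt_trichotomy i j with hij | rfl | hij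
  · rw [commProd_wedge_single_of_lt hij]
    rfl
  · rw [wedge_self, commProd_zero, comm_self]
    rfl
  · rw [wedge_swap, commProd_neg, commProd_wedge_single_of_lt hij, Subgroup.coe_inv, genComm,
      inv_comm]

lemma comm_eq_commProd [Fact (1 < p)] (x y : ItoGroup p r) :
    comm x y = commProd (wedge (itoVec x) (itoVec y)) := by
  -- both sides are homomorphisms in each variable, so it suffices that they agree on generators
  have hG := comm_mem_center_itoGroup (p := p) (r := r)
  let commLeft (x : ItoGroup p r) : ItoGroup p r →* Subgroup.center (ItoGroup p r) :=
    MonoidHom.mk' (fun y => ⟨comm x y, hG x y⟩)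
      fun y y' => Subtype.ext (comm_mul_right_of_forall_mem_center hG x y y')
  let prodLeft (u : Fin (r + 1) → ZMod p) : ItoGroup p r →* Subgroup.center (ItoGroup p r) :=
    MonoidHom.mk' (fun y => commProd (wedge u (itoVec y)))
      fun y y' => by rw [itoVec_mul, wedge_add_right, commProd_add]
  have hgen (i : Fin (r + 1)) : commLeft (itoGen p r i) = prodLeft (Pi.single i 1) :=
    PresentedGroup.ext fun j => Subtype.ext <| by
      change comm (itoGen p r i) (itoGen p r j) =
        (commProd (wedge (Pi.single i 1) (itoVec (itoGen p r j))) : ItoGroup p r)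
      rw [itoVec_itoGen, commProd_wedge_single]
  let commRight : ItoGroup p r →* Subgroup.center (ItoGroup p r) :=
    MonoidHom.mk' (fun x => ⟨comm x y, hG x y⟩)
      fun x x' => Subtype.ext (comm_mul_left_of_forall_mem_center hG x x' y)
  let prodRight : ItoGroup p r →* Subgroup.center (ItoGroup p r) :=
    MonoidHom.mk' (fun x => commProd (wedge (itoVec x) (itoVec y)))
      fun x x' => by rw [itoVec_mul, wedge_add_left, commProd_add]
  have h : commRight = prodRight := PresentedGroup.ext fun i => by
    change commRight (itoGen p r i) = prodRight (itoGen p r i)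
    simpa [commLeft, prodLeft, commRight, prodRight] using DFunLike.congr_fun (hgen i) y
  exact congrArg Subtype.val (DFunLike.congr_fun h x)

lemma comm_eq_comm_iff [Fact (1 < p)] (x y x' y' : ItoGroup p r) :
    comm x y = comm x' y' ↔ wedge (itoVec x) (itoVec y) = wedge (itoVec x') (itoVec y') := by
  refine ⟨fun h => wedge_eq_wedge_of_forall_lt fun i j hij => ?_,
    fun h => by rw [comm_eq_commProd, comm_eq_commProd, h]⟩
  have h' := congrArg (fun g => (toItoModel p r g).a i j) h
  simpa [map_comm, TwistedProd.comm_eq, upperOuter_sub_swap_apply, hij, itoVec] using h'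

lemma card_KG_itoGroup [Fact (1 < p)] :
    Nat.card (KG (ItoGroup p r)) =
      Nat.card (Set.range (Function.uncurry (wedge (ι := Fin (r + 1)) (R := ZMod p)))) := by
  have hKG : KG (ItoGroup p r) = Set.range (Function.uncurry comm) := by
    ext; simp [KG]
  rw [hKG, card_range_eq_of_eq_iff (f := Function.uncurry comm)
    (g := Function.uncurry wedge ∘ Prod.map itoVec itoVec)
    fun a b => comm_eq_comm_iff a.1 a.2 b.1 b.2,
    (itoVec_surjective.prodMap itoVec_surjective).range_comp]

end Ito

theorem stmt9_general (p r : ℕ) (hp : p.Prime) (hr : 1 ≤ r) :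
    (Nat.card (KG (ItoGroup p r)) : ℚ) - 1 =
      ((p : ℚ) ^ (r + 1) - 1) * ((p : ℚ) ^ r - 1) / ((p : ℚ) ^ 2 - 1) := by
  have := Fact.mk hp
  have hcount := card_range_wedge_sub_one_mul (ι := Fin (r + 1)) (K := ZMod p)
    (by rw [Fintype.card_fin]; omega)
  rw [card_specialLinearGroup_fin_two, ← card_KG_itoGroup, ZMod.card, Fintype.card_fin] at hcount
  have hK : 1 ≤ Nat.card (KG (ItoGroup p r)) := by
    rw [card_KG_itoGroup, Nat.one_le_iff_ne_zero, Nat.card_ne_zero]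
    exact ⟨⟨⟨0, (0, 0), wedge_self 0⟩⟩, inferInstance⟩
  qify [hK, Nat.one_le_pow _ _ hp.pos, Nat.le_self_pow (Nat.succ_ne_zero r) p] at hcount
  have hp0 : (p : ℚ) ≠ 0 := by exact_mod_cast hp.ne_zero
  have hp_sq : (p : ℚ) ^ 2 - 1 ≠ 0 := by
    have : (2 : ℚ) ≤ p := by exact_mod_cast hp.two_le
    nlinarith
  rw [eq_div_iff hp_sq]
  refine mul_left_cancel₀ hp0 ?_
  linear_combination hcount

/-- `|K(G_r)| − 1 = (p^{r+1} − 1)(p^r − 1)/(p² − 1)` for Ito's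
group `G_r`. -/
theorem stmt9 (p r : ℕ) (hp : p.Prime) (hp2 : 2 < p) (hr : 1 ≤ r) :
    (Nat.card (KG (ItoGroup p r)) : ℚ) - 1 =
      ((p : ℚ) ^ (r + 1) - 1) * ((p : ℚ) ^ r - 1) / ((p : ℚ) ^ 2 - 1) :=
  stmt9_general p r hp hr

end Paper
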